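/- Let α ≥ 2 and let q : [0,∞) → [0,∞) be continuous with q ∈ L¹ ∩ L², satisfying the integrated identity q(t) = -∫_0^t q(s) ds + (2/α) ∫_0^{αt} q(s) ds - (1/α) ∫_0^{αt} q(s)² ds for all t, and q(t) → 0 as t → ∞. Then (1/α)‖q‖_{L²}² ≤ (2/α - 1)‖q‖_{L¹}, and since α ≥ 2 this forces q ≡ 0. -/
import Mathlib


open MeasureTheory intervalIntegral


lemma aux_zero_of_sq_integral_zero (q : ℝ → ℝ) (hqcont : ContinuousOn q (Set.Ici 0))
    (hL2 : IntegrableOn (fun s => (q s) ^ 2) (Set.Ioi 0))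
    (h : ∫ s in Set.Ioi (0 : ℝ), (q s) ^ 2 = 0) :
    ∀ t : ℝ, 0 ≤ t → q t = 0 := by
  have hsqnn : 0 ≤ᵐ[volume.restrict (Set.Ioi (0 : ℝ))] fun s => (q s) ^ 2 :=
    Filter.Eventually.of_forall fun x => sq_nonneg _
  have hae : (fun s => (q s) ^ 2) =ᵐ[volume.restrict (Set.Ioi (0 : ℝ))] 0 :=
    (MeasureTheory.integral_eq_zero_iff_of_nonneg_ae hsqnn hL2).1 h
  have haeq : q =ᵐ[volume.restrict (Set.Ioi (0 : ℝ))] 0 := by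
    filter_upwards [hae] with x hx
    exact pow_eq_zero_iff two_ne_zero |>.mp hx
  have haeq' : q =ᵐ[volume.restrict (Set.Ici (0 : ℝ))] 0 := by
    rwa [Measure.restrict_congr_set MeasureTheory.Ioi_ae_eq_Ici] at haeq
  have heqon : Set.EqOn q 0 (Set.Ici 0) := by
    refine Measure.eqOn_of_ae_eq haeq' hqcont continuousOn_const ?_
    rw [interior_Ici, closure_Ioi]
  exact fun t ht => heqon ht

set_option maxHeartbeats 1000000 in
/-- Let `α ≥ 2` and `q : [0,∞) → [0,∞)` continuous, in `L¹ ∩ L²`, satisfy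
`q(t) = -∫_0^t q + (2/α)∫_0^{αt} q - (1/α)∫_0^{αt} q²` for all `t ≥ 0`, and `q(t) → 0`.
Then `(1/α)‖q‖_{L²}² ≤ (2/α - 1)‖q‖_{L¹}`, and since `α ≥ 2` this forces `q ≡ 0`. -/
theorem L2_L1_inequality_forces_zero (α : ℝ) (hα : 2 ≤ α) (q : ℝ → ℝ)
    (hqcont : ContinuousOn q (Set.Ici 0))
    (hqnonneg : ∀ t : ℝ, 0 ≤ t → 0 ≤ q t)
    (hL1 : IntegrableOn q (Set.Ioi 0))
    (hL2 : IntegrableOn (fun s => (q s) ^ 2) (Set.Ioi 0))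
    (heq : ∀ t : ℝ, 0 ≤ t →
      q t = -(∫ s in (0 : ℝ)..t, q s) + (2 / α) * (∫ s in (0 : ℝ)..(α * t), q s)
              - (1 / α) * ∫ s in (0 : ℝ)..(α * t), (q s) ^ 2)
    (hlim : Filter.Tendsto q Filter.atTop (nhds 0)) :
    (1 / α) * (∫ s in Set.Ioi (0 : ℝ), (q s) ^ 2) ≤
        (2 / α - 1) * (∫ s in Set.Ioi (0 : ℝ), q s) ∧
    ∀ t : ℝ, 0 ≤ t → q t = 0 := by
  have hα0 : (0 : ℝ) < α := lt_of_lt_of_le two_pos hα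
  obtain ⟨I1, hI1⟩ : ∃ x, ∫ s in Set.Ioi (0 : ℝ), q s = x := ⟨_, rfl⟩
  obtain ⟨I2, hI2⟩ : ∃ x, ∫ s in Set.Ioi (0 : ℝ), (q s) ^ 2 = x := ⟨_, rfl⟩
  rw [hI1, hI2]
  have hmul : Filter.Tendsto (fun t : ℝ => α * t) Filter.atTop Filter.atTop :=
    Filter.Tendsto.const_mul_atTop hα0 Filter.tendsto_id
  have ht1 : Filter.Tendsto (fun t : ℝ => ∫ s in (0 : ℝ)..t, q s) Filter.atTop (nhds I1) :=
    hI1 ▸ intervalIntegral_tendsto_integral_Ioi 0 hL1 Filter.tendsto_id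
  have ht2 : Filter.Tendsto (fun t : ℝ => ∫ s in (0 : ℝ)..(α * t), q s) Filter.atTop (nhds I1) :=
    hI1 ▸ intervalIntegral_tendsto_integral_Ioi 0 hL1 hmul
  have ht3 : Filter.Tendsto (fun t : ℝ => ∫ s in (0 : ℝ)..(α * t), (q s) ^ 2)
      Filter.atTop (nhds I2) :=
    hI2 ▸ intervalIntegral_tendsto_integral_Ioi 0 hL2 hmul
  have hcomb : Filter.Tendsto
      (fun t : ℝ => -(∫ s in (0 : ℝ)..t, q s) + (2 / α) * (∫ s in (0 : ℝ)..(α * t), q s)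
        - (1 / α) * ∫ s in (0 : ℝ)..(α * t), (q s) ^ 2)
      Filter.atTop (nhds (-I1 + (2 / α) * I1 - (1 / α) * I2)) :=
    ((ht1.neg.add (ht2.const_mul _)).sub (ht3.const_mul _))
  have heq' : (fun t : ℝ => -(∫ s in (0 : ℝ)..t, q s) + (2 / α) * (∫ s in (0 : ℝ)..(α * t), q s)
        - (1 / α) * ∫ s in (0 : ℝ)..(α * t), (q s) ^ 2) =ᶠ[Filter.atTop] q := by
    filter_upwards [Filter.eventually_ge_atTop (0 : ℝ)] with t ht
    exact (heq t ht).symm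
  have key : -I1 + (2 / α) * I1 - (1 / α) * I2 = 0 :=
    tendsto_nhds_unique (hcomb.congr' heq') hlim
  have hkey : (1 / α) * I2 = (2 / α - 1) * I1 := by linarith
  have hI1nn : 0 ≤ I1 :=
    hI1 ▸ setIntegral_nonneg measurableSet_Ioi fun x hx => hqnonneg x (le_of_lt hx)
  have hI2nn : 0 ≤ I2 :=
    hI2 ▸ setIntegral_nonneg measurableSet_Ioi fun x hx => sq_nonneg _
  have hcoef : 2 / α - 1 ≤ 0 := by
    have : 2 / α ≤ 1 := (div_le_one hα0).2 hα
    linarith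
  have hI2zero : I2 = 0 := by
    have h1 : (1 / α) * I2 ≤ 0 := hkey ▸ mul_nonpos_of_nonpos_of_nonneg hcoef hI1nn
    nlinarith [one_div_pos.2 hα0]
  have hI2zero' : ∫ s in Set.Ioi (0 : ℝ), (q s) ^ 2 = 0 := by rw [hI2]; exact hI2zero
  exact ⟨le_of_eq hkey, aux_zero_of_sq_integral_zero q hqcont hL2 hI2zero'⟩
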